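/- arXiv:1201.0534 — 6 statements merged into one kernel-verified Lean document; each statement's English description precedes it below -/
import Mathlib

section
/- Let L₁ be the matrix with rows (0,u,v), (ū,0,0), (v̄,0,0), |u|²+|v|²=1, and let g be (√2/2) times the matrix with rows (1,0,−1), (ū, √2 v, ū), (v̄, −√2 u, v̄). Then g is unitary and g⁻¹ L₁ g = J where J = diag(1,0,−1). -/
/-!
The columns of `g` are the normalized eigenvectors `(1, ū, v̄)/√2`, `(0, v, -u)` and `(-1, ū, v̄)/√2`
of `L₁` for the eigenvalues `1, 0, -1`; they are orthonormal because `|u|² + |v|² = 1`. Hence `g` is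
unitary, `L₁ g = g J`, and `gᴴ L₁ g = gᴴ g J = J`.
-/

open Complex Matrix ComplexConjugate

def laxPotential (u v : ℂ) : Matrix (Fin 3) (Fin 3) ℂ :=
  !![0, u, v; conj u, 0, 0; conj v, 0, 0]

noncomputable def laxGauge (u v : ℂ) : Matrix (Fin 3) (Fin 3) ℂ :=
  (Real.sqrt 2 / 2 : ℝ) •
    !![1, 0, -1; conj u, Real.sqrt 2 * v, conj u; conj v, -(Real.sqrt 2 * u), conj v]

section

variable {u v : ℂ}

lemma mul_conj_add_mul_conj_eq_one (huv : ‖u‖ ^ 2 + ‖v‖ ^ 2 = 1) :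
    u * conj u + v * conj v = 1 := by
  simp only [mul_conj', ← ofReal_pow, ← ofReal_add, huv, ofReal_one]

lemma laxGauge_mul_conjTranspose_self (huv : ‖u‖ ^ 2 + ‖v‖ ^ 2 = 1) :
    laxGauge u v * (laxGauge u v)ᴴ = 1 := by
  have hnorm := mul_conj_add_mul_conj_eq_one huv
  have hsqrt : ((Real.sqrt 2 : ℝ) : ℂ) ^ 2 = 2 := by
    rw [← ofReal_pow, Real.sq_sqrt zero_le_two, ofReal_ofNat]
  ext i j
  fin_cases i <;> fin_cases j <;>
    simp [laxGauge, Matrix.mul_apply, Fin.sum_univ_three, one_apply, map_ofNat] <;> grind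

lemma laxPotential_mul_laxGauge (huv : ‖u‖ ^ 2 + ‖v‖ ^ 2 = 1) :
    laxPotential u v * laxGauge u v = laxGauge u v * diagonal ![1, 0, -1] := by
  have hnorm := mul_conj_add_mul_conj_eq_one huv
  ext i j
  fin_cases i <;> fin_cases j <;>
    simp [laxGauge, laxPotential, Matrix.mul_apply, Fin.sum_univ_three] <;> grind

end

/-- the gauge matrix `g` is unitary and diagonalizes `L₁`:
`g⁻¹ L₁ g = J = diag(1,0,-1)`. -/
theorem stmt4 (u v : ℂ) (huv : ‖u‖ ^ 2 + ‖v‖ ^ 2 = 1)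
    (L₁ g J : Matrix (Fin 3) (Fin 3) ℂ)
    (hL : L₁ = !![0, u, v; (starRingEnd ℂ) u, 0, 0; (starRingEnd ℂ) v, 0, 0])
    (hg : g = (Real.sqrt 2 / 2 : ℝ) •
      !![1, 0, -1;
         (starRingEnd ℂ) u, Real.sqrt 2 * v, (starRingEnd ℂ) u;
         (starRingEnd ℂ) v, -(Real.sqrt 2 * u), (starRingEnd ℂ) v])
    (hJ : J = Matrix.diagonal ![1, 0, -1]) :
    g * gᴴ = 1 ∧ gᴴ * L₁ * g = J := by
  obtain rfl : L₁ = laxPotential u v := hL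
  obtain rfl : g = laxGauge u v := hg
  subst hJ
  have hunitary := laxGauge_mul_conjTranspose_self huv
  refine ⟨hunitary, ?_⟩
  rw [Matrix.mul_assoc, laxPotential_mul_laxGauge huv, ← Matrix.mul_assoc,
    mul_eq_one_comm.mp hunitary, Matrix.one_mul]
end

section
/- Let μ ∈ ℂ with Re μ ≠ 0 and Im μ ≠ 0, let M be a 3×3 complex matrix, and define Φ(λ) = 𝟙 + λM/(λ−μ) + λ CMC/(λ+μ) and Ψ(λ) = 𝟙 + λM†/(λ−μ*) + λ CM†C/(λ+μ*), where C = diag(1,−1,−1). If Φ(λ)Ψ(λ) = 𝟙 for all λ ∈ ℂ \ {±μ, ±μ*}, then (𝟙 + μ* M/(μ* − μ) + μ* CMC/(μ* + μ)) M† = 0. -/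
/-!
Multiplying `Φ(λ)Ψ(λ) = 𝟙` by `λ - μ*` clears the simple pole of `Ψ` at `μ*`; both sides then
extend continuously to `λ = μ*`, where the left side becomes `μ* Φ(μ*) M†` and the right side
vanishes. Since `Re μ ≠ 0` and `Im μ ≠ 0`, the point `μ*` is distinct from `0` and from the
other poles `μ, -μ, -μ*`, so all of this takes place on a punctured neighbourhood of `μ*`.
-/

open Complex Matrix Filter Topology

theorem mul_eq_zero_of_mul_add_simplePole_eq_one {𝕜 A : Type*} [NontriviallyNormedField 𝕜]
    [Ring A] [Algebra 𝕜 A] [TopologicalSpace A] [IsTopologicalRing A] [ContinuousSMul 𝕜 A]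
    [T2Space A] [NoZeroSMulDivisors 𝕜 A] {Φ R : 𝕜 → A} {c : 𝕜} {P : A} (hc : c ≠ 0)
    (hΦ : ContinuousAt Φ c) (hR : ContinuousAt R c)
    (h : ∀ᶠ l in 𝓝[≠] c, Φ l * (1 + (l / (l - c)) • P + R l) = 1) :
    Φ c * P = 0 := by
  set F : 𝕜 → A := fun l => Φ l * ((l - c) • (1 + R l) + l • P)
  have hF : ContinuousAt F c := by fun_prop
  have hF_eq : F =ᶠ[𝓝[≠] c] fun l => (l - c) • (1 : A) := by
    filter_upwards [h, self_mem_nhdsWithin] with l hl hlc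
    have hlc : l - c ≠ 0 := sub_ne_zero.mpr hlc
    rw [← hl, ← mul_smul_comm]
    show Φ l * _ = Φ l * _
    congr 1
    simp only [smul_add, smul_smul, mul_div_cancel₀ _ hlc]
    abel
  have hF_c : F c = 0 := by
    have h_lim : ContinuousAt (fun l => (l - c) • (1 : A)) c := by fun_prop
    refine tendsto_nhds_unique (hF.continuousWithinAt.tendsto.congr' hF_eq) ?_
    simpa using h_lim.continuousWithinAt.tendsto (s := {c}ᶜ)
  have h_smul : c • (Φ c * P) = 0 := by simpa [F, mul_smul_comm] using hF_c
  exact (smul_eq_zero.mp h_smul).resolve_left hc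

theorem Complex.conj_ne_neg_self_of_re_ne_zero {z : ℂ} (hz : z.re ≠ 0) :
    starRingEnd ℂ z ≠ -z := by
  intro h
  have h_re := congrArg Complex.re h
  simp only [conj_re, neg_re] at h_re
  exact hz (by linarith)

theorem stmt6_general (μ : ℂ) (hre : μ.re ≠ 0) (him : μ.im ≠ 0)
    (M C : Matrix (Fin 3) (Fin 3) ℂ)
    (h : ∀ l : ℂ, l ≠ μ → l ≠ -μ → l ≠ (starRingEnd ℂ) μ → l ≠ -(starRingEnd ℂ) μ →
      ((1 : Matrix (Fin 3) (Fin 3) ℂ) + (l / (l - μ)) • M + (l / (l + μ)) • (C * M * C)) *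
      ((1 : Matrix (Fin 3) (Fin 3) ℂ) + (l / (l - (starRingEnd ℂ) μ)) • Mᴴ +
        (l / (l + (starRingEnd ℂ) μ)) • (C * Mᴴ * C)) = 1) :
    ((1 : Matrix (Fin 3) (Fin 3) ℂ)
      + ((starRingEnd ℂ) μ / ((starRingEnd ℂ) μ - μ)) • M
      + ((starRingEnd ℂ) μ / ((starRingEnd ℂ) μ + μ)) • (C * M * C)) * Mᴴ = 0 := by
  set c := (starRingEnd ℂ) μ
  have hc_μ : c ≠ μ := mt conj_eq_iff_im.mp him
  have hc_negμ : c ≠ -μ := conj_ne_neg_self_of_re_ne_zero hre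
  have hc_0 : c ≠ 0 := (map_ne_zero _).mpr fun h0 => hre (by simp [h0])
  have hc_negc : c ≠ -c := self_ne_neg.mpr hc_0
  have hc_sub_μ : c - μ ≠ 0 := sub_ne_zero.mpr hc_μ
  have hc_add_μ : c + μ ≠ 0 := fun h0 => hc_negμ (eq_neg_of_add_eq_zero_left h0)
  have hc_add_c : c + c ≠ 0 := fun h0 => hc_negc (eq_neg_of_add_eq_zero_left h0)
  refine mul_eq_zero_of_mul_add_simplePole_eq_one
    (Φ := fun l => 1 + (l / (l - μ)) • M + (l / (l + μ)) • (C * M * C))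
    (R := fun l => (l / (l + c)) • (C * Mᴴ * C))
    hc_0 (by fun_prop (disch := assumption)) (by fun_prop (disch := assumption)) ?_
  have h_poles : ∀ᶠ l in 𝓝 c, l ≠ μ ∧ l ≠ -μ ∧ l ≠ -c :=
    (eventually_ne_nhds hc_μ).and ((eventually_ne_nhds hc_negμ).and (eventually_ne_nhds hc_negc))
  filter_upwards [nhdsWithin_le_nhds h_poles, self_mem_nhdsWithin]
    with l ⟨hl_μ, hl_negμ, hl_negc⟩ hl_c
  exact h l hl_μ hl_negμ hl_c hl_negc

/-- if the rational dressing factor `Φ` and its proposed inverse `Ψ`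
satisfy `Φ(λ)Ψ(λ) = 𝟙` away from the poles `±μ, ±μ*`, then the residue condition
`(𝟙 + μ* M/(μ*-μ) + μ* CMC/(μ*+μ)) M† = 0` holds. -/
theorem stmt6 (μ : ℂ) (hre : μ.re ≠ 0) (him : μ.im ≠ 0)
    (M C : Matrix (Fin 3) (Fin 3) ℂ)
    (hC : C = Matrix.diagonal ![1, -1, -1])
    (h : ∀ l : ℂ, l ≠ μ → l ≠ -μ → l ≠ (starRingEnd ℂ) μ → l ≠ -(starRingEnd ℂ) μ →
      ((1 : Matrix (Fin 3) (Fin 3) ℂ) + (l / (l - μ)) • M + (l / (l + μ)) • (C * M * C)) *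
      ((1 : Matrix (Fin 3) (Fin 3) ℂ) + (l / (l - (starRingEnd ℂ) μ)) • Mᴴ +
        (l / (l + (starRingEnd ℂ) μ)) • (C * Mᴴ * C)) = 1) :
    ((1 : Matrix (Fin 3) (Fin 3) ℂ)
      + ((starRingEnd ℂ) μ / ((starRingEnd ℂ) μ - μ)) • M
      + ((starRingEnd ℂ) μ / ((starRingEnd ℂ) μ + μ)) • (C * M * C)) * Mᴴ = 0 :=
  stmt6_general μ hre him M C h
end

section
/- Let κ ≠ 0 be real, C = diag(1,−1,−1), M a 3×3 complex matrix, and define Φ(λ) = 𝟙 + λ(M/(λ−iκ) + CMC/(λ+iκ)). If Φ(λ)Φ†(λ*) = 𝟙 identically in λ, then M C M† = 0; in particular, if M = |n⟩⟨m| has rank one, then ⟨m|C|m⟩ = 0, i.e. |m₁|² = |m₂|² + |m₃|². -/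
/-!
Write `u = λ/(λ - iκ)` and `v = λ/(λ + iκ)`. Since `C` is a hermitian involution,
`Φ(λ*)† = 1 + v M† + u C M† C`, and `Φ(λ)Φ(λ*)† - 1` is a combination of `u`, `v`, `uv`, `u²`, `v²`
with constant matrix coefficients, the coefficient of `u²` being `M C M† C`. Clearing the
denominators `(λ - iκ)²(λ + iκ)²` turns the unitarity relation into a polynomial identity valid
off `±iκ`, hence everywhere by continuity; at `λ = iκ` only the `u²` term survives, with the
factor `4 (iκ)⁴ ≠ 0`. For `M = |n⟩⟨m|` one has `M C M† = ⟨m|C|m⟩ |n⟩⟨n|`.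
-/

open Complex Matrix
open scoped ComplexConjugate

theorem doublePole_coeff_eq_zero {E : Type*} [AddCommGroup E] [Module ℂ E] [TopologicalSpace E]
    [IsTopologicalAddGroup E] [ContinuousSMul ℂ E] [T2Space E] {a : ℂ} (ha : a ≠ 0)
    {A B X Y Z : E}
    (h : ∀ l, l ≠ a → l ≠ -a →
      (l / (l - a)) • A + (l / (l + a)) • B + (l / (l - a) * (l / (l + a))) • X +
        (l / (l - a)) ^ 2 • Y + (l / (l + a)) ^ 2 • Z = 0) :
    Y = 0 := by
  set P : ℂ → E := fun l => (l * (l - a) * (l + a) ^ 2) • A + (l * (l - a) ^ 2 * (l + a)) • B +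
    (l ^ 2 * (l - a) * (l + a)) • X + (l ^ 2 * (l + a) ^ 2) • Y + (l ^ 2 * (l - a) ^ 2) • Z
  have hP : P = 0 := by
    refine Continuous.ext_on (dense_univ.sdiff_finite (Set.toFinite {a, -a})) (by fun_prop)
      continuous_const ?_
    rintro l ⟨-, hl⟩
    simp only [Set.mem_insert_iff, Set.mem_singleton_iff, not_or] at hl
    have hsub : l - a ≠ 0 := sub_ne_zero.mpr hl.1
    have hadd : l + a ≠ 0 := fun h0 => hl.2 (eq_neg_iff_add_eq_zero.mpr h0)
    rw [Pi.zero_apply, ← smul_zero (((l - a) * (l + a)) ^ 2), ← h l hl.1 hl.2]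
    match_scalars <;> field_simp
  have h4 : (4 * a ^ 4) • Y = 0 := by
    rw [← Pi.zero_apply (M := fun _ : ℂ => E) a, ← hP]
    match_scalars <;> ring
  exact (smul_eq_zero.mp h4).resolve_left (by simp [ha])

theorem one_add_smul_mul_one_add_smul {R A : Type*} [CommRing R] [Ring A] [Algebra R A] {C : A}
    (hC : C * C = 1) (u v : R) (M N : A) :
    (1 + u • M + v • (C * M * C)) * (1 + v • N + u • (C * N * C)) =
      1 + u • (M + C * N * C) + v • (C * M * C + N) + (u * v) • (M * N + C * (M * N) * C) +
        u ^ 2 • (M * C * N * C) + v ^ 2 • (C * M * C * N) := by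
  have hCC : ∀ X : A, C * (C * X) = X := fun X => by rw [← mul_assoc, hC, one_mul]
  simp only [mul_add, add_mul, one_mul, mul_one, smul_mul_assoc, mul_smul_comm, mul_assoc, hCC]
  module

noncomputable def dressingFactor {n : Type*} [Fintype n] [DecidableEq n] (a : ℂ)
    (M C : Matrix n n ℂ) (l : ℂ) : Matrix n n ℂ :=
  1 + (l / (l - a)) • M + (l / (l + a)) • (C * M * C)

theorem conjTranspose_dressingFactor_conj {n : Type*} [Fintype n] [DecidableEq n] {a : ℂ}
    (ha : conj a = -a) {C : Matrix n n ℂ} (hC : Cᴴ = C) (M : Matrix n n ℂ) (l : ℂ) :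
    (dressingFactor a M C (conj l))ᴴ = 1 + (l / (l + a)) • Mᴴ + (l / (l - a)) • (C * Mᴴ * C) := by
  simp [dressingFactor, hC, ha, mul_assoc, ← sub_eq_add_neg]

theorem vecMulVec_mul_mul_conjTranspose_eq_zero_iff {n α : Type*} [Fintype n] [Field α]
    [StarRing α] {x : n → α} (hx : x ≠ 0) (y : n → α) (C : Matrix n n α) :
    vecMulVec x (star y) * C * (vecMulVec x (star y))ᴴ = 0 ↔ star y ᵥ* C ⬝ᵥ y = 0 := by
  rw [vecMulVec_mul, conjTranspose_vecMulVec, star_star, vecMulVec_mul_vecMulVec,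
    vecMulVec_eq_zero, smul_eq_zero, star_eq_zero]
  simp [hx]

/-- for the doublet dressing factor with imaginary poles `±iκ`,
`Φ(λ)Φ†(λ*) = 𝟙` forces `M C M† = 0`; for rank-one `M = |n⟩⟨m|` with `n ≠ 0`
this means `⟨m|C|m⟩ = 0`, i.e. `|m₁|² = |m₂|² + |m₃|²`. -/
theorem stmt7 (κ : ℝ) (hκ : κ ≠ 0)
    (M C : Matrix (Fin 3) (Fin 3) ℂ)
    (hC : C = Matrix.diagonal ![1, -1, -1])
    (Φ : ℂ → Matrix (Fin 3) (Fin 3) ℂ)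
    (hΦ : Φ = fun l => (1 : Matrix (Fin 3) (Fin 3) ℂ) +
      (l / (l - Complex.I * κ)) • M + (l / (l + Complex.I * κ)) • (C * M * C))
    (h : ∀ l : ℂ, l ≠ Complex.I * κ → l ≠ -(Complex.I * κ) →
      Φ l * (Φ ((starRingEnd ℂ) l))ᴴ = 1) :
    M * C * Mᴴ = 0 ∧
    (∀ n m : Fin 3 → ℂ, n ≠ 0 →
      M = Matrix.vecMulVec n (fun k => (starRingEnd ℂ) (m k)) →
      ‖m 0‖ ^ 2 = ‖m 1‖ ^ 2 + ‖m 2‖ ^ 2) := by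
  have hCH : Cᴴ = C := by
    rw [hC, diagonal_conjTranspose]
    congr 1; ext i; fin_cases i <;> simp
  have hCC : C * C = 1 := by
    rw [hC, diagonal_mul_diagonal, ← diagonal_one]
    congr 1; ext i; fin_cases i <;> simp
  obtain rfl : Φ = dressingFactor (I * κ) M C := hΦ
  have hMCMC : M * C * Mᴴ * C = 0 := by
    refine doublePole_coeff_eq_zero (mul_ne_zero I_ne_zero (ofReal_ne_zero.mpr hκ))
      (A := M + C * Mᴴ * C) (B := C * M * C + Mᴴ) (X := M * Mᴴ + C * (M * Mᴴ) * C)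
      (Z := C * M * C * Mᴴ) fun l hl₁ hl₂ => ?_
    have hl := h l hl₁ hl₂
    rw [conjTranspose_dressingFactor_conj (by simp) hCH, dressingFactor,
      one_add_smul_mul_one_add_smul hCC, ← sub_eq_zero] at hl
    convert hl using 1
    abel
  have hMCM : M * C * Mᴴ = 0 := by simpa [mul_assoc, hCC] using congrArg (· * C) hMCMC
  refine ⟨hMCM, fun n m hn hM => ?_⟩
  rw [hM] at hMCM
  have hm := (vecMulVec_mul_mul_conjTranspose_eq_zero_iff hn m C).mp hMCM
  simp only [dotProduct, hC, vecMul_diagonal, Pi.star_apply, RCLike.star_def, Fin.sum_univ_three,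
    cons_val_zero, cons_val_one, cons_val, mul_one, mul_neg, neg_mul, conj_mul'] at hm
  have hnorm : (‖m 0‖ ^ 2 : ℂ) = ‖m 1‖ ^ 2 + ‖m 2‖ ^ 2 := by linear_combination hm
  exact_mod_cast hnorm
end

section
/- For ω, κ ∈ ℝ with ω ≠ 0, define u₁(x,t) = 0 and v₁(x,t) = exp{4i arctan( κ cos(2ωx + φ) / (ω cosh(2κx + θ)) )} for real constants φ, θ. Then |u₁|² + |v₁|² = 1 and (u₁, v₁) is a stationary solution of the system i u_t + u_{xx} + (u ū_x + v v̄_x)u_x + ∂_x(u ū_x + v v̄_x)u = 0, i v_t + v_{xx} + (u ū_x + v v̄_x)v_x + ∂_x(u ū_x + v v̄_x)v = 0. -/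
/-!
Writing `v = exp (i α)` with `α` real, `v v̄ = 1` gives `S = v v̄' = -i α'`, so `S' v = -i α'' v`
and `S v' = α'² v`, which cancel exactly against `v'' = i α'' v - α'² v`.
-/

open Complex ComplexConjugate

section UnimodularPhase

variable {α : ℝ → ℝ}

theorem hasDerivAt_exp_ofReal_mul_I {α' x : ℝ} (h : HasDerivAt α α' x) :
    HasDerivAt (fun y => exp (α y * I)) (α' * I * exp (α x * I)) x := by
  simpa only [mul_comm] using (h.ofReal_comp.mul_const I).cexp

theorem deriv_exp_ofReal_mul_I (hα : Differentiable ℝ α) :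
    deriv (fun y => exp (α y * I)) = fun x => ↑(deriv α x) * I * exp (α x * I) :=
  funext fun x => (hasDerivAt_exp_ofReal_mul_I (hα x).hasDerivAt).deriv

theorem exp_ofReal_mul_I_mul_conj_deriv (hα : Differentiable ℝ α) :
    (fun x => exp (α x * I) * conj (deriv (fun y => exp (α y * I)) x))
      = fun x => -(↑(deriv α x) * I) := by
  funext x
  have hunit : exp (α x * I) * conj (exp (α x * I)) = 1 := by
    rw [mul_conj, normSq_eq_norm_sq, norm_exp_ofReal_mul_I]
    norm_num
  rw [deriv_exp_ofReal_mul_I hα, map_mul, map_mul, conj_ofReal, conj_I]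
  linear_combination (-(↑(deriv α x) * I)) * hunit

theorem exp_ofReal_mul_I_stationary (hα : Differentiable ℝ α)
    (hα' : Differentiable ℝ (deriv α)) (v S : ℝ → ℂ) (hv : v = fun y => exp (α y * I))
    (hS : S = fun y => v y * conj (deriv v y)) (x : ℝ) :
    deriv (deriv v) x + S x * deriv v x + deriv S x * v x = 0 := by
  have hα'_at : HasDerivAt (fun y => ((deriv α y : ℝ) : ℂ)) ↑(deriv (deriv α) x) x :=
    (hα' x).hasDerivAt.ofReal_comp
  have hvx : HasDerivAt v (↑(deriv α x) * I * v x) x := by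
    rw [hv]; exact hasDerivAt_exp_ofReal_mul_I (hα x).hasDerivAt
  have hv' : deriv v = fun y => ↑(deriv α y) * I * v y := by
    rw [hv, deriv_exp_ofReal_mul_I hα]
  have hv'' : deriv (deriv v) x
      = ↑(deriv (deriv α) x) * I * v x + ↑(deriv α x) * I * (↑(deriv α x) * I * v x) := by
    rw [hv']
    exact ((hα'_at.mul_const I).mul hvx).deriv
  have hS' : S = fun y => -(↑(deriv α y) * I) := by
    rw [hS, hv, exp_ofReal_mul_I_mul_conj_deriv hα]
  have hSx : deriv S x = -(↑(deriv (deriv α) x) * I) := by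
    rw [hS']; exact (hα'_at.mul_const I).neg.deriv
  rw [hv'', hSx, hS', hv']
  ring

end UnimodularPhase

theorem stmt10_general (ω κ φ θ : ℝ)
    (u v : ℝ → ℂ) (hu : u = fun _ => 0)
    (hv : v = fun x => Complex.exp (4 * Complex.I *
      (Real.arctan (κ * Real.cos (2 * ω * x + φ) / (ω * Real.cosh (2 * κ * x + θ))) : ℂ)))
    (S : ℝ → ℂ)
    (hS : S = fun x => u x * (starRingEnd ℂ) (deriv u x)
        + v x * (starRingEnd ℂ) (deriv v x)) :
    (∀ x, ‖u x‖ ^ 2 + ‖v x‖ ^ 2 = 1) ∧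
    (∀ x, deriv (deriv u) x + S x * deriv u x + deriv S x * u x = 0) ∧
    (∀ x, deriv (deriv v) x + S x * deriv v x + deriv S x * v x = 0) := by
  -- Pulling `κ / ω` out of the quotient is valid also at `ω = 0` (both sides are `0`) and
  -- leaves only `cosh` in a denominator.
  set α : ℝ → ℝ := fun x =>
    4 * Real.arctan (κ / ω * (Real.cos (2 * ω * x + φ) / Real.cosh (2 * κ * x + θ)))
  have hv_phase : v = fun x => exp (α x * I) := by
    rw [hv]; funext x
    simp only [α, mul_div_mul_comm, ofReal_mul, ofReal_ofNat]
    ring_nf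
  have hα : ContDiff ℝ 2 α :=
    contDiff_const.mul <| Real.contDiff_arctan.comp <| by
      fun_prop (disch := exact fun x => (Real.cosh_pos _).ne')
  subst hu
  refine ⟨fun x => by simp [hv_phase, norm_exp_ofReal_mul_I], fun x => by simp, ?_⟩
  refine exp_ofReal_mul_I_stationary (hα.differentiable two_ne_zero) hα.differentiable_deriv_two
    v S hv_phase ?_
  simpa using hS

/-- the stationary quadruplet one-soliton `u₁ = 0`,
`v₁ = exp(4i arctan(κ cos(2ωx+φ)/(ω cosh(2κx+θ))))` solves the generalized
Heisenberg ferromagnet system (stationary: `u_t = v_t = 0`) and `|u₁|²+|v₁|²=1`. -/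
theorem stmt10 (ω κ φ θ : ℝ) (hω : ω ≠ 0)
    (u v : ℝ → ℂ) (hu : u = fun _ => 0)
    (hv : v = fun x => Complex.exp (4 * Complex.I *
      (Real.arctan (κ * Real.cos (2 * ω * x + φ) / (ω * Real.cosh (2 * κ * x + θ))) : ℂ)))
    (S : ℝ → ℂ)
    (hS : S = fun x => u x * (starRingEnd ℂ) (deriv u x)
        + v x * (starRingEnd ℂ) (deriv v x)) :
    (∀ x, ‖u x‖ ^ 2 + ‖v x‖ ^ 2 = 1) ∧
    (∀ x, deriv (deriv u) x + S x * deriv u x + deriv S x * u x = 0) ∧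
    (∀ x, deriv (deriv v) x + S x * deriv v x + deriv S x * v x = 0) :=
  stmt10_general ω κ φ θ u v hu hv S hS
end

section
/- Let ω, κ > 0 and define Q(y) = 2ω e^{κy+c} + (ω+iκ) e^{−κy−c} for real y and constant c ∈ ℝ. Then Q(y) ≠ 0 for all y ∈ ℝ, and the functions u₁ = 4iωκ Q̄ e^{iφ}/((ω−iκ)Q²) and v₁ = 1 − 8ωκ²/((ω−iκ)Q²) satisfy |u₁|² + |v₁|² = 1 for any real phase φ. -/
/-!
Write `Q = X + iY`. Clearing the denominator `D = (ω - iκ) Q²`, the identity `|u₁|² + |v₁|² = 1`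
becomes `16 ω² κ² |Q|² + 64 ω² κ⁴ = 16 ω κ² Re D`, and `Re D - ω |Q|² = 2 Y (κ X - ω Y)`.
For `Q = 2ω a + (ω + iκ) b` one has `κ X - ω Y = 2 ω κ a`, so this equals `4 ω κ² a b`, and
`a b = 1` because `a = e^{κy+c}` and `b = e^{-κy-c}`. Positivity of `Re Q` gives `Q ≠ 0`.
-/

open Complex

theorem norm_div_sq_add_norm_one_sub_div_sq {N D : ℂ} {r : ℝ} (hD : D ≠ 0)
    (h : ‖N‖ ^ 2 + r ^ 2 = 2 * r * D.re) : ‖N / D‖ ^ 2 + ‖1 - r / D‖ ^ 2 = 1 := by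
  have hD' : ‖D‖ ^ 2 ≠ 0 := by positivity
  have hsub : ‖D - r‖ ^ 2 = ‖D‖ ^ 2 - 2 * r * D.re + r ^ 2 := by
    simp only [Complex.sq_norm, normSq_sub, normSq_ofReal, conj_ofReal, mul_re, ofReal_re,
      ofReal_im]
    ring
  rw [one_sub_div hD, norm_div, norm_div, div_pow, div_pow, ← add_div, hsub,
    div_eq_one_iff_eq hD']
  linarith

theorem re_sub_I_mul_mul_sq_sub_mul_normSq (ω κ : ℝ) (z : ℂ) :
    ((ω - I * κ) * z ^ 2).re - ω * normSq z = 2 * z.im * (κ * z.re - ω * z.im) := by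
  simp only [normSq_apply, mul_re, mul_im, sub_re, sub_im, pow_two, I_re, I_im, ofReal_re,
    ofReal_im]
  ring

theorem quadruplet_re (ω κ a b : ℝ) :
    (2 * ω * a + (ω + I * κ) * b : ℂ).re = 2 * ω * a + ω * b := by
  simp

theorem quadruplet_im (ω κ a b : ℝ) : (2 * ω * a + (ω + I * κ) * b : ℂ).im = κ * b := by
  simp

theorem quadruplet_ne_zero {ω a b : ℝ} (κ : ℝ) (hω : 0 < ω) (ha : 0 < a) (hb : 0 ≤ b) :
    (2 * ω * a + (ω + I * κ) * b : ℂ) ≠ 0 := by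
  intro h
  have hre := quadruplet_re ω κ a b
  rw [h, zero_re] at hre
  nlinarith [mul_pos hω ha, mul_nonneg hω.le hb]

theorem quadruplet_dressing (ω κ : ℝ) {a b : ℝ} (hab : a * b = 1) :
    ((ω - I * κ) * (2 * ω * a + (ω + I * κ) * b) ^ 2).re
      = ω * normSq (2 * ω * a + (ω + I * κ) * b : ℂ) + 4 * ω * κ ^ 2 := by
  have h := re_sub_I_mul_mul_sq_sub_mul_normSq ω κ (2 * ω * a + (ω + I * κ) * b)
  rw [quadruplet_re, quadruplet_im] at h
  linear_combination h + 4 * ω * κ ^ 2 * hab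

/-- `Q(y) = 2ω e^{κy+c} + (ω+iκ) e^{-κy-c}` never vanishes, and the
traveling-wave quadruplet soliton `(u₁, v₁)` built from it satisfies
`|u₁|² + |v₁|² = 1`. -/
theorem stmt12 (ω κ c φ : ℝ) (hω : 0 < ω) (hκ : 0 < κ)
    (Q : ℝ → ℂ)
    (hQ : Q = fun y => 2 * ω * Real.exp (κ * y + c)
      + ((ω : ℂ) + Complex.I * κ) * Real.exp (-(κ * y) - c))
    (u₁ v₁ : ℝ → ℂ)
    (hu : u₁ = fun y => 4 * Complex.I * ω * κ * (starRingEnd ℂ) (Q y) *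
      Complex.exp (Complex.I * φ) / (((ω : ℂ) - Complex.I * κ) * Q y ^ 2))
    (hv : v₁ = fun y => 1 - 8 * ω * κ ^ 2 / (((ω : ℂ) - Complex.I * κ) * Q y ^ 2)) :
    (∀ y : ℝ, Q y ≠ 0) ∧
    (∀ y : ℝ, ‖u₁ y‖ ^ 2 + ‖v₁ y‖ ^ 2 = 1) := by
  have hQ_ne (y : ℝ) : Q y ≠ 0 := by
    rw [hQ]
    exact quadruplet_ne_zero κ hω (Real.exp_pos _) (Real.exp_pos _).le
  refine ⟨hQ_ne, fun y => ?_⟩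
  have hab : Real.exp (κ * y + c) * Real.exp (-(κ * y) - c) = 1 := by
    rw [← Real.exp_add, ← Real.exp_zero]
    ring_nf
  have hD : ((ω : ℂ) - I * κ) * Q y ^ 2 ≠ 0 := by
    refine mul_ne_zero (fun h => ?_) (pow_ne_zero _ (hQ_ne y))
    simpa [hω.ne'] using congrArg re h
  have hN : ‖4 * I * ω * κ * (starRingEnd ℂ) (Q y) * exp (I * φ)‖ ^ 2
      = 16 * ω ^ 2 * κ ^ 2 * normSq (Q y) := by
    simp only [norm_mul, RCLike.norm_conj, norm_exp_I_mul_ofReal, norm_I, norm_real,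
      Real.norm_of_nonneg hω.le, Real.norm_of_nonneg hκ.le, ← Complex.sq_norm]
    norm_num
    ring
  have h := norm_div_sq_add_norm_one_sub_div_sq (r := 8 * ω * κ ^ 2) hD (by
    rw [hN, hQ]
    linear_combination (-16 * ω * κ ^ 2) * quadruplet_dressing ω κ hab)
  subst hu hv
  push_cast at h
  exact h
end

section
/- Let κ, σ₀ ∈ ℝ, κ ≠ 0, and σ(t) = σ₀ − 2κ²t. The function x ↦ |u₁(x,t)|² with u₁ given by the doublet soliton formula u₁ = 2(cosh²(κx) + iσ(t)) e^{iθ} sinh(κx)/(cosh²(κx) − iσ(t))² (θ real) attains its maxima at the points x = ±ξ₀(t) where cosh²(κ ξ₀) = 1 + √(1+σ(t)²), i.e. ξ₀(t) = (1/κ) ln( √(1+√(1+σ²)) + (1+σ²)^{1/4} ); equivalently, d/dx |u₁(x,t)|² = 0 at x = ξ₀(t) and ξ₀ satisfies sinh²(κξ₀) = √(1+σ(t)²). -/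
/-!
`|u₁|² = 4 sinh²(κx) / (cosh⁴(κx) + σ²)`, and with `s = sinh²(κx)` this is the profile
`4s / ((1 + s)² + σ²)`, maximized at `s = √(1 + σ²)`. The point `ξ₀` is exactly
`κξ₀ = arsinh ((1 + σ²)^{1/4})`, so `sinh²(κξ₀) = √(1 + σ²)`.
-/

open Complex

theorem Real.rpow_one_div_four_sq {x : ℝ} (hx : 0 ≤ x) : (x ^ ((1 : ℝ) / 4)) ^ 2 = √x := by
  rw [← Real.rpow_natCast, ← Real.rpow_mul hx, Real.sqrt_eq_rpow]
  norm_num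

theorem sq_norm_doublet (c s σ θ : ℝ) :
    ‖2 * ((c : ℂ) ^ 2 + I * σ) * exp (I * θ) * s / ((c : ℂ) ^ 2 - I * σ) ^ 2‖ ^ 2
      = 4 * s ^ 2 / ((c ^ 2) ^ 2 + σ ^ 2) := by
  have hplus : ‖(c : ℂ) ^ 2 + I * σ‖ ^ 2 = (c ^ 2) ^ 2 + σ ^ 2 := by
    rw [Complex.sq_norm, show (c : ℂ) ^ 2 + I * σ = ((c ^ 2 : ℝ) : ℂ) + σ * I by
      push_cast; ring, normSq_add_mul_I]
  have hminus : ‖(c : ℂ) ^ 2 - I * σ‖ ^ 2 = (c ^ 2) ^ 2 + σ ^ 2 := by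
    rw [Complex.sq_norm,
      show (c : ℂ) ^ 2 - I * σ = ((c ^ 2 : ℝ) : ℂ) + ((-σ : ℝ) : ℂ) * I by push_cast; ring,
      normSq_add_mul_I, neg_sq]
  have hphase : ‖exp (I * θ)‖ = 1 := by
    rw [mul_comm]; exact norm_exp_ofReal_mul_I θ
  simp only [norm_div, norm_mul, norm_pow, div_pow, mul_pow, hplus, hminus, hphase,
    Complex.norm_two, norm_real, Real.norm_eq_abs, sq_abs]
  rcases eq_or_ne ((c ^ 2) ^ 2 + σ ^ 2) 0 with hD | hD
  · simp [hD]
  · field_simp; ring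

noncomputable def doubletProfile (σ s : ℝ) : ℝ := 4 * s / ((1 + s) ^ 2 + σ ^ 2)

-- With `A = √(1 + σ²)` the denominator at `s = A` is `2A(1 + A)`, and the gap is `(s - A)²`.
theorem doubletProfile_le_sqrt (σ : ℝ) {s : ℝ} (hs : 0 ≤ s) :
    doubletProfile σ s ≤ doubletProfile σ √(1 + σ ^ 2) := by
  have hA : √(1 + σ ^ 2) ^ 2 = 1 + σ ^ 2 := Real.sq_sqrt (by positivity)
  have hA0 : 0 ≤ √(1 + σ ^ 2) := Real.sqrt_nonneg _
  unfold doubletProfile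
  rw [div_le_div_iff₀ (by positivity) (by positivity)]
  nlinarith [mul_nonneg hA0 (sq_nonneg (s - √(1 + σ ^ 2)))]

theorem stmt19_general (κ θ : ℝ) (hκ : κ ≠ 0)
    (σ : ℝ)
    (u₁ : ℝ → ℂ)
    (hu : u₁ = fun x => 2 * (((Real.cosh (κ * x) : ℂ)) ^ 2 + Complex.I * σ) *
      Complex.exp (Complex.I * θ) * (Real.sinh (κ * x) : ℂ) /
      (((Real.cosh (κ * x) : ℂ)) ^ 2 - Complex.I * σ) ^ 2)
    (ξ₀ : ℝ)
    (hξ : ξ₀ = (1 / κ) * Real.log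
      (Real.sqrt (1 + Real.sqrt (1 + σ ^ 2)) + (1 + σ ^ 2) ^ ((1 : ℝ) / 4))) :
    Real.sinh (κ * ξ₀) ^ 2 = Real.sqrt (1 + σ ^ 2) ∧
    Real.cosh (κ * ξ₀) ^ 2 = 1 + Real.sqrt (1 + σ ^ 2) ∧
    deriv (fun x => ‖u₁ x‖ ^ 2) ξ₀ = 0 ∧
    (∀ x : ℝ, ‖u₁ x‖ ^ 2 ≤ ‖u₁ ξ₀‖ ^ 2) ∧
    ‖u₁ (-ξ₀)‖ ^ 2 = ‖u₁ ξ₀‖ ^ 2 := by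
  have hb : ((1 + σ ^ 2) ^ ((1 : ℝ) / 4)) ^ 2 = √(1 + σ ^ 2) :=
    Real.rpow_one_div_four_sq (by positivity)
  have harsinh : κ * ξ₀ = Real.arsinh ((1 + σ ^ 2) ^ ((1 : ℝ) / 4)) := by
    rw [hξ, Real.arsinh, hb, add_comm, ← mul_assoc, mul_one_div_cancel hκ, one_mul]
  have hsinh : Real.sinh (κ * ξ₀) ^ 2 = √(1 + σ ^ 2) := by
    rw [harsinh, Real.sinh_arsinh, hb]
  have hcosh : Real.cosh (κ * ξ₀) ^ 2 = 1 + √(1 + σ ^ 2) := by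
    rw [harsinh, Real.cosh_arsinh, Real.sq_sqrt (by positivity), hb]
  have hprofile : ∀ x, ‖u₁ x‖ ^ 2 = doubletProfile σ (Real.sinh (κ * x) ^ 2) := fun x => by
    rw [hu, sq_norm_doublet, Real.cosh_sq']; rfl
  have hmax : ∀ x, ‖u₁ x‖ ^ 2 ≤ ‖u₁ ξ₀‖ ^ 2 := fun x => by
    rw [hprofile, hprofile, hsinh]; exact doubletProfile_le_sqrt σ (sq_nonneg _)
  have hcrit : deriv (fun x => ‖u₁ x‖ ^ 2) ξ₀ = 0 :=
    IsLocalMax.deriv_eq_zero (Filter.Eventually.of_forall hmax)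
  refine ⟨hsinh, hcosh, hcrit, hmax, ?_⟩
  rw [hprofile, hprofile, mul_neg, Real.sinh_neg, neg_sq]

/-- the doublet-soliton amplitude `|u₁(·,t)|²` attains its maxima
at `x = ±ξ₀(t)`, where `ξ₀(t) = (1/κ) ln(√(1+√(1+σ²)) + (1+σ²)^{1/4})` with
`σ(t) = σ₀ - 2κ²t`; equivalently `sinh²(κξ₀) = √(1+σ²)`,
`cosh²(κξ₀) = 1 + √(1+σ²)` and `d/dx |u₁|²` vanishes at `ξ₀`. -/
theorem stmt19 (κ σ₀ θ t : ℝ) (hκ : κ ≠ 0)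
    (σ : ℝ) (hσ : σ = σ₀ - 2 * κ ^ 2 * t)
    (u₁ : ℝ → ℂ)
    (hu : u₁ = fun x => 2 * (((Real.cosh (κ * x) : ℂ)) ^ 2 + Complex.I * σ) *
      Complex.exp (Complex.I * θ) * (Real.sinh (κ * x) : ℂ) /
      (((Real.cosh (κ * x) : ℂ)) ^ 2 - Complex.I * σ) ^ 2)
    (ξ₀ : ℝ)
    (hξ : ξ₀ = (1 / κ) * Real.log
      (Real.sqrt (1 + Real.sqrt (1 + σ ^ 2)) + (1 + σ ^ 2) ^ ((1 : ℝ) / 4))) :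
    Real.sinh (κ * ξ₀) ^ 2 = Real.sqrt (1 + σ ^ 2) ∧
    Real.cosh (κ * ξ₀) ^ 2 = 1 + Real.sqrt (1 + σ ^ 2) ∧
    deriv (fun x => ‖u₁ x‖ ^ 2) ξ₀ = 0 ∧
    (∀ x : ℝ, ‖u₁ x‖ ^ 2 ≤ ‖u₁ ξ₀‖ ^ 2) ∧
    ‖u₁ (-ξ₀)‖ ^ 2 = ‖u₁ ξ₀‖ ^ 2 :=
  stmt19_general κ θ hκ σ u₁ hu ξ₀ hξ
end
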